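/- Let P be an n×n row-stochastic matrix and let i, j, k ∈ {1,…,n} be pairwise distinct. Suppose every directed walk from i to k in the transition digraph of P passes through j, i.e., for every finite sequence v_0 = i, v_1, …, v_m = k (m ≥ 1) with P(v_{t}, v_{t+1}) > 0 for all 0 ≤ t < m, there exists some t with v_t = j. Then for every τ ≥ 1, Σ_{t=1}^{τ} F_t(i,k) ≤ Σ_{t=1}^{τ} F_t(i,j), i.e., ℙ(T_ik ≤ τ) ≤ ℙ(T_ij ≤ τ). -/

import Mathlib

/-- First-hitting-time probability matrices: `hitF P t` is `F_{t+1}`, i.e.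
`F_1 = P` and `F_{k+1} = P (F_k - Diag(F_k))`. -/
def hitF {α : Type*} [Fintype α] [DecidableEq α] (P : Matrix α α ℝ) : ℕ → Matrix α α ℝ
  | 0 => P
  | k + 1 => P * (hitF P k - Matrix.diagonal fun i => hitF P k i i)

/-!
First-step analysis gives `ℙ(T_ab ≤ τ+1) = ∑_c P(a,c) · (1 if c = b else ℙ(T_cb ≤ τ))`.
Let `S` be the set of states other than `j` from which every walk to `k` passes through `j`.
Then `i ∈ S`, no edge leaves `S` for `k`, and every other edge out of `S` ends at `j` or in `S`.
By induction on `τ`, the two first-step expansions for `k` and for `j` compare termwise on `S`: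
at a successor in `S` by the induction hypothesis, at the successor `j` since a capture
probability is at most `1`.
-/

open Finset

section Walks

variable {α : Type*} (P : Matrix α α ℝ)

def AllWalksVia (j k a : α) : Prop :=
  ∀ m : ℕ, 1 ≤ m → ∀ v : ℕ → α, v 0 = a → v m = k →
    (∀ t < m, 0 < P (v t) (v (t + 1))) → ∃ t ≤ m, v t = j

variable {P}

lemma AllWalksVia.not_pos {j k a : α} (h : AllWalksVia P j k a) (haj : a ≠ j) (hjk : j ≠ k) :
    ¬ 0 < P a k := by
  intro hak
  obtain ⟨t, ht, hvt⟩ := h 1 le_rfl (fun | 0 => a | _ + 1 => k) rfl rfl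
    fun t ht => Nat.lt_one_iff.mp ht ▸ hak
  interval_cases t
  exacts [haj hvt, hjk hvt.symm]

lemma AllWalksVia.of_pos {j k a b : α} (h : AllWalksVia P j k a) (haj : a ≠ j)
    (hab : 0 < P a b) : AllWalksVia P j k b := by
  intro m hm w hw0 hwm hw
  obtain ⟨t, ht, hvt⟩ := h (m + 1) (by omega) (fun | 0 => a | t + 1 => w t) rfl hwm <| by
    rintro (_ | t) ht
    · simpa [hw0] using hab
    · exact hw t (by omega)
  rcases t with _ | t
  · exact absurd hvt haj
  · exact ⟨t, by omega, hvt⟩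

end Walks

section Capture

variable {α : Type*} [Fintype α] [DecidableEq α] (P : Matrix α α ℝ)

noncomputable def captureProb (τ : ℕ) (a b : α) : ℝ := ∑ t ∈ range τ, hitF P t a b

lemma hitF_succ_apply (t : ℕ) (a b : α) :
    hitF P (t + 1) a b = ∑ c, P a c * (if c = b then 0 else hitF P t c b) := by
  simp only [hitF, Matrix.mul_apply, Matrix.sub_apply, Matrix.diagonal_apply]
  refine sum_congr rfl fun c _ => ?_
  split_ifs with h <;> simp [h]

lemma captureProb_succ (τ : ℕ) (a b : α) :
    captureProb P (τ + 1) a b = ∑ c, P a c * (if c = b then 1 else captureProb P τ c b) := by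
  have split (c : α) : P a c * (if c = b then 1 else captureProb P τ c b) =
      (if c = b then P a c else 0) + ∑ t ∈ range τ, P a c * (if c = b then 0 else hitF P t c b) := by
    split_ifs <;> simp [captureProb, mul_sum]
  simp only [split, sum_add_distrib, sum_ite_eq', mem_univ, if_true]
  rw [captureProb, sum_range_succ', sum_comm, add_comm]
  simp only [hitF_succ_apply, hitF.eq_1]

lemma captureProb_le_one (hP0 : ∀ a b, 0 ≤ P a b) (hP1 : ∀ a, ∑ b, P a b ≤ 1) (τ : ℕ) (a b : α) :
    captureProb P τ a b ≤ 1 := by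
  induction τ generalizing a with
  | zero => simp [captureProb]
  | succ τ ih =>
    calc captureProb P (τ + 1) a b
        ≤ ∑ c, P a c := by
          rw [captureProb_succ]
          refine sum_le_sum fun c _ => mul_le_of_le_one_right (hP0 a c) ?_
          split_ifs
          exacts [le_rfl, ih c]
      _ ≤ 1 := hP1 a

theorem captureProb_le_of_closed (hP0 : ∀ a b, 0 ≤ P a b) (hP1 : ∀ a, ∑ b, P a b ≤ 1)
    {j k : α} (S : Set α) (hSk : ∀ a ∈ S, ¬ 0 < P a k)
    (hSclosed : ∀ a ∈ S, ∀ b, 0 < P a b → b ≠ j → b ∈ S) (τ : ℕ) :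
    ∀ a ∈ S, captureProb P τ a k ≤ captureProb P τ a j := by
  induction τ with
  | zero => simp [captureProb]
  | succ τ ih =>
    intro a ha
    rw [captureProb_succ, captureProb_succ]
    refine sum_le_sum fun c _ => ?_
    rcases (hP0 a c).eq_or_lt with hac | hac
    · simp [← hac]
    refine mul_le_mul_of_nonneg_left ?_ hac.le
    have hck : c ≠ k := by rintro rfl; exact hSk a ha hac
    by_cases hcj : c = j
    · simp only [hcj, if_true]
      split_ifs
      exacts [le_rfl, captureProb_le_one P hP0 hP1 τ j k]
    · simp only [hck, hcj, if_false]
      exact ih c (hSclosed a ha c hac hcj)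

end Capture

theorem stmt_8_general (n : ℕ) (P : Matrix (Fin n) (Fin n) ℝ)
    (hP0 : ∀ a b, 0 ≤ P a b) (hP1 : ∀ a, ∑ b, P a b = 1)
    (i j k : Fin n) (hij : i ≠ j) (hjk : j ≠ k)
    (hwalk : ∀ m : ℕ, 1 ≤ m → ∀ v : ℕ → Fin n, v 0 = i → v m = k →
      (∀ t < m, 0 < P (v t) (v (t + 1))) → ∃ t ≤ m, v t = j)
    (τ : ℕ) :
    ∑ t ∈ Finset.range τ, hitF P t i k ≤ ∑ t ∈ Finset.range τ, hitF P t i j :=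
  captureProb_le_of_closed P hP0 (fun a => (hP1 a).le) {a | a ≠ j ∧ AllWalksVia P j k a}
    (fun _ ha => ha.2.not_pos ha.1 hjk)
    (fun _ ha _ hab hbj => ⟨hbj, ha.2.of_pos ha.1 hab⟩) τ i ⟨hij, hwalk⟩

/-- Dominated strategy for the intruder, case (ii): if every directed walk from `i` to `k`
in the transition digraph of the row-stochastic matrix `P` passes through `j`, then
`ℙ(T_ik ≤ τ) ≤ ℙ(T_ij ≤ τ)` for every `τ ≥ 1`. -/
theorem stmt_8 (n : ℕ) (P : Matrix (Fin n) (Fin n) ℝ)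
    (hP0 : ∀ a b, 0 ≤ P a b) (hP1 : ∀ a, ∑ b, P a b = 1)
    (i j k : Fin n) (hij : i ≠ j) (hik : i ≠ k) (hjk : j ≠ k)
    (hwalk : ∀ m : ℕ, 1 ≤ m → ∀ v : ℕ → Fin n, v 0 = i → v m = k →
      (∀ t < m, 0 < P (v t) (v (t + 1))) → ∃ t ≤ m, v t = j)
    (τ : ℕ) (hτ : 1 ≤ τ) :
    ∑ t ∈ Finset.range τ, hitF P t i k ≤ ∑ t ∈ Finset.range τ, hitF P t i j :=
  stmt_8_general n P hP0 hP1 i j k hij hjk hwalk τ
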